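/- arXiv:0912.0043 — 3 statements merged into one kernel-verified Lean document; each statement's English description precedes it below -/
import Mathlib

section
/- The congruence subgroup Γ_1(3) ⊂ SL(2,Z), consisting of matrices congruent to an upper unitriangular matrix mod 3, is generated by T = [[1,1],[0,1]] and S = [[1,0],[−3,1]], and these satisfy the relation (ST)^3 = 1 (equivalently Γ_1(3) is presented by two generators with the single relation that the cube of their product is the identity). -/
/-!
Both generators lie in `Γ₁(3)`, so it remains to write every `g = [[a, b], [c, d]] ∈ Γ₁(3)` as a
word in `T` and `Smat`; we descend on `|c|`. Left multiplication by `T ^ n` replaces `a` by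
`a + n c`, which can be made at most `|c| / 2` in absolute value; being `≡ 1 mod 3` it is
nonzero, and left multiplication by `Smat ^ m` then replaces `c` by `c - 3 m a`, which can be made
at most `3 |a| / 2 ≤ 3 |c| / 4 < |c|`. When `c = 0`, `a d = 1` and `a ≡ 1 mod 3` force
`a = d = 1`, so `g` is a power of `T`.
-/

/-- `T = [[1,1],[0,1]] ∈ SL(2,ℤ)`. -/
def Tmat : Matrix.SpecialLinearGroup (Fin 2) ℤ :=
  ⟨!![1, 1; 0, 1], by norm_num [Matrix.det_fin_two_of]⟩

/-- `S = [[1,0],[−3,1]] ∈ SL(2,ℤ)`. -/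
def Smat : Matrix.SpecialLinearGroup (Fin 2) ℤ :=
  ⟨!![1, 0; -3, 1], by norm_num [Matrix.det_fin_two_of]⟩

open Matrix Matrix.SpecialLinearGroup ModularGroup CongruenceSubgroup
open scoped MatrixGroups

theorem Int.exists_two_mul_natAbs_add_mul_le (a : ℤ) {b : ℤ} (hb : b ≠ 0) :
    ∃ n : ℤ, 2 * (a + n * b).natAbs ≤ b.natAbs := by
  have hpos : 0 < b.natAbs := Int.natAbs_pos.mpr hb
  obtain ⟨k, hk⟩ := Int.dvd_self_sub_bmod (x := a) (m := b.natAbs)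
  refine ⟨-(k * b.sign), ?_⟩
  have hr : a + -(k * b.sign) * b = a.bmod b.natAbs := by
    rw [← Int.sign_mul_self b] at hk
    linear_combination hk
  have := Int.le_bmod (x := a) hpos
  have := Int.bmod_le (x := a) hpos
  omega

theorem CongruenceSubgroup.Gamma1_mem_iff_modEq (N : ℕ) (g : SL(2, ℤ)) :
    g ∈ Gamma1 N ↔ g 0 0 ≡ 1 [ZMOD N] ∧ g 1 1 ≡ 1 [ZMOD N] ∧ g 1 0 ≡ 0 [ZMOD N] := by
  simp only [Gamma1_mem, ← ZMod.intCast_eq_intCast_iff, Int.cast_one, Int.cast_zero]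

theorem CongruenceSubgroup.T_mem_Gamma1 (N : ℕ) : T ∈ Gamma1 N := by
  simp

theorem ModularGroup.eq_T_zpow_of_c_eq_zero_of_a_eq_one {g : SL(2, ℤ)} (hc : g 1 0 = 0)
    (ha : g 0 0 = 1) : g = T ^ g 0 1 := by
  have hd : g 1 1 = 1 := by
    have := g.det_coe
    rw [det_fin_two, hc, ha] at this
    linarith
  ext i j
  fin_cases i <;> fin_cases j <;> simp [coe_T_zpow, ha, hc, hd]

theorem Tmat_eq_T : Tmat = T := rfl

theorem Smat_mem_Gamma1_three : Smat ∈ Gamma1 3 :=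
  (Gamma1_mem_iff_modEq 3 Smat).2 (by decide)

theorem Smat_eq_conj : Smat = S * T ^ 3 * S⁻¹ := by decide

theorem coe_Smat_zpow (m : ℤ) : ↑(Smat ^ m) = !![1, 0; -3 * m, 1] := by
  rw [Smat_eq_conj, conj_zpow, ← zpow_natCast, ← _root_.zpow_mul]
  simp [coe_T_zpow, S_inv, coe_S]

theorem eq_T_zpow_of_mem_Gamma1_three {g : SL(2, ℤ)} (hg : g ∈ Gamma1 3) (hc : g 1 0 = 0) :
    g = T ^ g 0 1 := by
  refine eq_T_zpow_of_c_eq_zero_of_a_eq_one hc ?_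
  have had : g 0 0 * g 1 1 = 1 := by
    have := g.det_coe
    rw [det_fin_two, hc] at this
    linarith
  have ha : g 0 0 ≡ 1 [ZMOD 3] := ((Gamma1_mem_iff_modEq 3 g).1 hg).1
  rcases Int.eq_one_or_neg_one_of_mul_eq_one' had with ⟨h, -⟩ | ⟨h, -⟩
  · exact h
  · rw [h] at ha
    contradiction

theorem exists_natAbs_Smat_zpow_mul_T_zpow_mul_lt {g : SL(2, ℤ)} (hg : g ∈ Gamma1 3)
    (hc : g 1 0 ≠ 0) : ∃ m n : ℤ, ((Smat ^ m * (T ^ n * g)) 1 0).natAbs < (g 1 0).natAbs := by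
  obtain ⟨n, hn⟩ := Int.exists_two_mul_natAbs_add_mul_le (g 0 0) hc
  set h := T ^ n * g with h_def
  have hh : h ∈ Gamma1 3 := mul_mem (zpow_mem (T_mem_Gamma1 3) n) hg
  have ha : h 0 0 = g 0 0 + n * g 1 0 := by
    simp [h_def, coe_T_zpow, mul_apply, Fin.sum_univ_two]
  have hc' : h 1 0 = g 1 0 := congrFun (T_pow_mul_apply_one n g) 0
  have ha0 : h 0 0 ≠ 0 := by
    intro h0
    have := ((Gamma1_mem_iff_modEq 3 h).1 hh).1
    rw [h0] at this
    contradiction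
  obtain ⟨m, hm⟩ := Int.exists_two_mul_natAbs_add_mul_le (h 1 0) (b := -3 * h 0 0) (by omega)
  refine ⟨m, n, ?_⟩
  have hSm : (Smat ^ m * h) 1 0 = h 1 0 + m * (-3 * h 0 0) := by
    simp [coe_Smat_zpow, mul_apply, Fin.sum_univ_two]
    ring
  rw [hSm]
  omega

theorem Gamma1_three_le_closure : Gamma1 3 ≤ Subgroup.closure {T, Smat} := by
  have hT : T ∈ Subgroup.closure {T, Smat} := Subgroup.subset_closure (by simp)
  have hS : Smat ∈ Subgroup.closure {T, Smat} := Subgroup.subset_closure (by simp)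
  intro g hg
  induction hN : (g 1 0).natAbs using Nat.strong_induction_on generalizing g with
  | _ N ih =>
  by_cases hc : g 1 0 = 0
  · rw [eq_T_zpow_of_mem_Gamma1_three hg hc]
    exact zpow_mem hT _
  obtain ⟨m, n, hlt⟩ := exists_natAbs_Smat_zpow_mul_T_zpow_mul_lt hg hc
  have hg' : Smat ^ m * (T ^ n * g) ∈ Gamma1 3 :=
    mul_mem (zpow_mem Smat_mem_Gamma1_three m) (mul_mem (zpow_mem (T_mem_Gamma1 3) n) hg)
  have hmem := ih _ (hN ▸ hlt) hg' rfl
  rwa [mul_mem_cancel_left (zpow_mem hS m), mul_mem_cancel_left (zpow_mem hT n)] at hmem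

theorem closure_T_Smat_eq_Gamma1_three : Subgroup.closure {T, Smat} = Gamma1 3 := by
  refine le_antisymm ?_ Gamma1_three_le_closure
  rw [Subgroup.closure_le, Set.insert_subset_iff, Set.singleton_subset_iff]
  exact ⟨T_mem_Gamma1 3, Smat_mem_Gamma1_three⟩

/-- The congruence subgroup `Γ_1(3) ⊂ SL(2,ℤ)` of matrices congruent mod 3 to an upper
unitriangular matrix is generated by `T` and `S`, and these satisfy `(S*T)^3 = 1`. -/
theorem stmt3 :
    ((Subgroup.closure {Tmat, Smat} :
        Subgroup (Matrix.SpecialLinearGroup (Fin 2) ℤ)) : Set (Matrix.SpecialLinearGroup (Fin 2) ℤ))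
      = {g : Matrix.SpecialLinearGroup (Fin 2) ℤ |
          ((g : Matrix (Fin 2) (Fin 2) ℤ) 0 0) ≡ 1 [ZMOD 3] ∧
          ((g : Matrix (Fin 2) (Fin 2) ℤ) 1 1) ≡ 1 [ZMOD 3] ∧
          ((g : Matrix (Fin 2) (Fin 2) ℤ) 1 0) ≡ 0 [ZMOD 3]} ∧
    (Smat * Tmat) ^ 3 = 1 := by
  refine ⟨?_, by decide⟩
  rw [Tmat_eq_T, closure_T_Smat_eq_Gamma1_three]
  ext g
  exact Gamma1_mem_iff_modEq 3 g
end

section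
/- For real numbers t, m with m > 0, and an exceptional pair of slopes/discriminants (μ_0, Δ_0), (μ_2, Δ_2) with μ_0 < μ_2 as above, the condition that the phases of Z^{t,m} on classes of slope μ_0 and μ_2 agree, i.e., Im Z^{t,m}(v_0)/Re Z^{t,m}(v_0) = Im Z^{t,m}(v_2)/Re Z^{t,m}(v_2) for classes v_j = (r_j, d_j, c_j) with c_j/r_j = −Δ_j + μ_j^2/2, is equivalent to (t − C)^2 + m^2 = ρ, where C = (1/2)(μ_0 + μ_2) + (Δ_0 − Δ_2)/(μ_2 − μ_0) and ρ = ((Δ_0 − Δ_2)/(μ_2 − μ_0))^2 + (1/4)(μ_2 − μ_0)^2 − (Δ_0 + Δ_2). -/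
/-!
Writing `d = μ r` and `c = r (μ²/2 − Δ)`, the central charge of a class of positive rank is
`r · (Δ − ((t − μ)² − m²)/2 + i m (μ − t))`. The cross product `Im Z(v₀) Re Z(v₂) − Im Z(v₂) Re Z(v₀)`
is then `m r₀ r₂` times a polynomial in `t, m` which factors as `(μ₀ − μ₂)/2 · ((t − C)² + m² − ρ)`;
the prefactor is nonzero since `m, r₀, r₂ > 0` and `μ₀ ≠ μ₂`.
-/

open Complex

noncomputable section

def centralCharge (t m r d c : ℝ) : ℂ :=
  -(c : ℂ) + ((t : ℂ) + (m : ℂ) * I) * (d : ℂ) - (((t : ℂ) + (m : ℂ) * I) ^ 2 / 2) * (r : ℂ)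

def semicircleCenter (μ0 μ2 Δ0 Δ2 : ℝ) : ℝ :=
  (1 / 2) * (μ0 + μ2) + (Δ0 - Δ2) / (μ2 - μ0)

def semicircleRadiusSq (μ0 μ2 Δ0 Δ2 : ℝ) : ℝ :=
  ((Δ0 - Δ2) / (μ2 - μ0)) ^ 2 + (1 / 4) * (μ2 - μ0) ^ 2 - (Δ0 + Δ2)

end

section CentralCharge

variable (t m r μ Δ : ℝ)

theorem centralCharge_re_of_slope :
    (centralCharge t m r (μ * r) (r * (-Δ + μ ^ 2 / 2))).re
      = r * (Δ - ((t - μ) ^ 2 - m ^ 2) / 2) := by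
  simp only [centralCharge, sub_re, add_re, neg_re, mul_re, sq, add_im, mul_im,
    ofReal_re, ofReal_im, I_re, I_im, div_ofNat_re, div_ofNat_im]
  ring

theorem centralCharge_im_of_slope :
    (centralCharge t m r (μ * r) (r * (-Δ + μ ^ 2 / 2))).im = r * (m * (μ - t)) := by
  simp only [centralCharge, sub_im, add_im, neg_im, mul_im, mul_re, sq, add_re,
    ofReal_re, ofReal_im, I_re, I_im, div_ofNat_re, div_ofNat_im]
  ring

end CentralCharge

theorem semicircle_factorization (t m μ0 μ2 Δ0 Δ2 : ℝ) (hμ : μ0 ≠ μ2) :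
    m * (μ0 - t) * (Δ2 - ((t - μ2) ^ 2 - m ^ 2) / 2)
        - m * (μ2 - t) * (Δ0 - ((t - μ0) ^ 2 - m ^ 2) / 2)
      = m * (μ0 - μ2) / 2 * ((t - semicircleCenter μ0 μ2 Δ0 Δ2) ^ 2 + m ^ 2
          - semicircleRadiusSq μ0 μ2 Δ0 Δ2) := by
  have : μ2 - μ0 ≠ 0 := sub_ne_zero.mpr hμ.symm
  simp only [semicircleCenter, semicircleRadiusSq]
  field_simp
  ring

theorem centralCharge_phase_eq_iff (t m r0 r2 μ0 μ2 Δ0 Δ2 : ℝ) (hm : m ≠ 0)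
    (hr0 : r0 ≠ 0) (hr2 : r2 ≠ 0) (hμ : μ0 ≠ μ2) :
    let Z0 := centralCharge t m r0 (μ0 * r0) (r0 * (-Δ0 + μ0 ^ 2 / 2))
    let Z2 := centralCharge t m r2 (μ2 * r2) (r2 * (-Δ2 + μ2 ^ 2 / 2))
    Z0.im * Z2.re = Z2.im * Z0.re ↔
      (t - semicircleCenter μ0 μ2 Δ0 Δ2) ^ 2 + m ^ 2 = semicircleRadiusSq μ0 μ2 Δ0 Δ2 := by
  intro Z0 Z2
  have cross : Z0.im * Z2.re - Z2.im * Z0.re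
      = r0 * r2 * (m * (μ0 - μ2) / 2) * ((t - semicircleCenter μ0 μ2 Δ0 Δ2) ^ 2 + m ^ 2
          - semicircleRadiusSq μ0 μ2 Δ0 Δ2) := by
    simp only [Z0, Z2, centralCharge_re_of_slope, centralCharge_im_of_slope]
    linear_combination r0 * r2 * semicircle_factorization t m μ0 μ2 Δ0 Δ2 hμ
  have prefactor : r0 * r2 * (m * (μ0 - μ2) / 2) ≠ 0 := by
    have := sub_ne_zero.mpr hμ
    positivity
  rw [← sub_eq_zero, cross, mul_eq_zero_iff_left prefactor, sub_eq_zero]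

/-- For `Z^{t,m}(r,d,c) = −c + (t+im)d − ((t+im)²/2)r` with `m > 0`, and classes `v_j`
with slopes `μ_j = d_j/r_j`, `μ_0 < μ_2`, and `c_j/r_j = −Δ_j + μ_j²/2`, the
phase-equality condition `Im Z(v_0) · Re Z(v_2) = Im Z(v_2) · Re Z(v_0)` is equivalent to
the semicircle equation `(t − C)² + m² = ρ` with
`C = (μ_0+μ_2)/2 + (Δ_0−Δ_2)/(μ_2−μ_0)` and
`ρ = ((Δ_0−Δ_2)/(μ_2−μ_0))² + (μ_2−μ_0)²/4 − (Δ_0+Δ_2)`. -/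
theorem stmt11 (t m : ℝ) (hm : 0 < m)
    (r0 r2 d0 d2 c0 c2 μ0 μ2 Δ0 Δ2 : ℝ)
    (hr0 : 0 < r0) (hr2 : 0 < r2)
    (hμ0 : μ0 = d0 / r0) (hμ2 : μ2 = d2 / r2) (hμ : μ0 < μ2)
    (hc0 : c0 / r0 = -Δ0 + μ0 ^ 2 / 2) (hc2 : c2 / r2 = -Δ2 + μ2 ^ 2 / 2) :
    let Z : ℝ → ℝ → ℝ → ℂ := fun r d c =>
      -(c : ℂ) + ((t : ℂ) + (m : ℂ) * Complex.I) * (d : ℂ)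
        - (((t : ℂ) + (m : ℂ) * Complex.I) ^ 2 / 2) * (r : ℂ)
    let C : ℝ := (1 / 2) * (μ0 + μ2) + (Δ0 - Δ2) / (μ2 - μ0)
    let ρ : ℝ := ((Δ0 - Δ2) / (μ2 - μ0)) ^ 2 + (1 / 4) * (μ2 - μ0) ^ 2 - (Δ0 + Δ2)
    ((Z r0 d0 c0).im * (Z r2 d2 c2).re = (Z r2 d2 c2).im * (Z r0 d0 c0).re)
      ↔ ((t - C) ^ 2 + m ^ 2 = ρ) := by
  obtain rfl : d0 = μ0 * r0 := ((eq_div_iff hr0.ne').mp hμ0).symm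
  obtain rfl : d2 = μ2 * r2 := ((eq_div_iff hr2.ne').mp hμ2).symm
  obtain rfl : c0 = r0 * (-Δ0 + μ0 ^ 2 / 2) := by rw [(div_eq_iff hr0.ne').mp hc0, mul_comm]
  obtain rfl : c2 = r2 * (-Δ2 + μ2 ^ 2 / 2) := by rw [(div_eq_iff hr2.ne').mp hc2, mul_comm]
  exact centralCharge_phase_eq_iff t m r0 r2 μ0 μ2 Δ0 Δ2 hm.ne' hr0.ne' hr2.ne' hμ.ne
end

section
/- The series ∑_{n=1}^∞ (3n−1)!/(n!)^3 · (1/27)^n converges, and its value is strictly less than 1/(π√3). -/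
/-!
Writing `a n` for the `n`-th term, the ratio `a (n + 1) / a n = (3n+3)(3n+4)(3n+5) / (27 (n+2)³)`
is at most `(n + 1) / (n + 3)`, which is exactly the ratio of consecutive terms of
`1 / ((n + 1)(n + 2))`. Since `a 0 = 2/27`, this gives `a n ≤ (4/27) / ((n + 1)(n + 2))`, and the
telescoping series `∑ 1 / ((n + 1)(n + 2)) = 1` bounds the sum by `4/27 ≈ 0.148`, while
`1 / (π√3) > 1 / (3.15 · 2) > 4/27`.
-/

open Filter Topology

theorem hasSum_sub_succ_of_antitone {f : ℕ → ℝ} {l : ℝ} (hf : Antitone f)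
    (hl : Tendsto f atTop (𝓝 l)) : HasSum (fun n ↦ f n - f (n + 1)) (f 0 - l) := by
  rw [hasSum_iff_tendsto_nat_of_nonneg (fun n ↦ sub_nonneg.2 (hf n.le_succ))]
  simp only [Finset.sum_range_sub']
  exact tendsto_const_nhds.sub hl

theorem hasSum_inv_succ_mul_succ_add_two :
    HasSum (fun n : ℕ ↦ ((n + 1 : ℝ) * (n + 2))⁻¹) 1 := by
  have hanti : Antitone fun n : ℕ ↦ 1 / ((n : ℝ) + 1) := fun m n hmn ↦
    one_div_le_one_div_of_le (by positivity) (by exact_mod_cast Nat.succ_le_succ hmn)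
  convert hasSum_sub_succ_of_antitone hanti tendsto_one_div_add_atTop_nhds_zero_nat using 1
  · ext n
    push_cast
    field_simp
    ring
  · norm_num

theorem le_div_succ_mul_succ_add_two_of_ratio_le {a : ℕ → ℝ} {C : ℝ} (h₀ : a 0 ≤ C / 2)
    (hstep : ∀ n : ℕ, a (n + 1) ≤ a n * ((n + 1) / (n + 3))) (n : ℕ) :
    a n ≤ C / ((n + 1) * (n + 2)) := by
  induction n with
  | zero => simpa using h₀
  | succ n ih =>
    calc a (n + 1) ≤ a n * ((n + 1) / (n + 3)) := hstep n
      _ ≤ C / ((n + 1) * (n + 2)) * ((n + 1) / (n + 3)) := by gcongr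
      _ = C / (((n + 1 : ℕ) + 1) * ((n + 1 : ℕ) + 2)) := by
        push_cast
        field_simp
        ring

noncomputable def seriesTerm (n : ℕ) : ℝ :=
  ((Nat.factorial (3 * n + 2) : ℝ) / (Nat.factorial (n + 1) : ℝ) ^ 3) * (1 / 27 : ℝ) ^ (n + 1)

theorem seriesTerm_nonneg (n : ℕ) : 0 ≤ seriesTerm n := by
  unfold seriesTerm
  positivity

theorem seriesTerm_zero : seriesTerm 0 = 2 / 27 := by
  norm_num [seriesTerm, Nat.factorial]

theorem seriesTerm_succ (n : ℕ) :
    seriesTerm (n + 1) =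
      seriesTerm n * ((3 * n + 3) * (3 * n + 4) * (3 * n + 5) / (27 * (n + 2) ^ 3)) := by
  have hnum : ((3 * (n + 1) + 2).factorial : ℝ) =
      (3 * n + 3) * (3 * n + 4) * (3 * n + 5) * (3 * n + 2).factorial := by
    rw [show 3 * (n + 1) + 2 = 3 * n + 2 + 1 + 1 + 1 by ring]
    simp only [Nat.factorial_succ]
    push_cast
    ring
  have hden : ((n + 1 + 1).factorial : ℝ) = (n + 2) * (n + 1).factorial := by
    rw [Nat.factorial_succ]
    push_cast
    ring
  rw [seriesTerm, seriesTerm, hnum, hden]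
  field_simp
  ring

theorem seriesTerm_ratio_le (n : ℕ) :
    (3 * n + 3) * (3 * n + 4) * (3 * n + 5) / (27 * (n + 2) ^ 3) ≤ ((n : ℝ) + 1) / (n + 3) := by
  rw [div_le_div_iff₀ (by positivity) (by positivity)]
  -- after cross-multiplying, the difference of the two sides is `(n + 1) (21 n + 36)`
  nlinarith [sq_nonneg (n : ℝ)]

theorem seriesTerm_le (n : ℕ) : seriesTerm n ≤ (4 / 27) / ((n + 1) * (n + 2)) :=
  le_div_succ_mul_succ_add_two_of_ratio_le (by norm_num [seriesTerm_zero])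
    (fun n ↦ (seriesTerm_succ n).trans_le
      (mul_le_mul_of_nonneg_left (seriesTerm_ratio_le n) (seriesTerm_nonneg n))) n

theorem four_div_twentySeven_lt_one_div_pi_mul_sqrt_three : (4 / 27 : ℝ) < 1 / (Real.pi * Real.sqrt 3) := by
  have hsqrt : Real.sqrt 3 < 2 := (Real.sqrt_lt' two_pos).2 (by norm_num)
  rw [lt_one_div (by norm_num) (by positivity)]
  nlinarith [Real.pi_lt_d2, Real.pi_pos, Real.sqrt_nonneg 3]

/-- The series `∑_{n=1}^∞ (3n−1)!/(n!)³ · 27^{−n}` converges and its sum is strictly less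
than `1/(π√3)`. (Indexed below by `n : ℕ` via `n ↦ n+1`, with `3(n+1) − 1 = 3n + 2`.) -/
theorem stmt13 :
    Summable (fun n : ℕ =>
      ((Nat.factorial (3 * n + 2) : ℝ) / (Nat.factorial (n + 1) : ℝ) ^ 3)
        * (1 / 27 : ℝ) ^ (n + 1)) ∧
    (∑' n : ℕ, ((Nat.factorial (3 * n + 2) : ℝ) / (Nat.factorial (n + 1) : ℝ) ^ 3)
        * (1 / 27 : ℝ) ^ (n + 1))
      < 1 / (Real.pi * Real.sqrt 3) := by
  have hmajorant := hasSum_inv_succ_mul_succ_add_two.mul_left (4 / 27 : ℝ)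
  simp only [← div_eq_mul_inv, mul_one] at hmajorant
  have hsummable : Summable seriesTerm :=
    hmajorant.summable.of_nonneg_of_le seriesTerm_nonneg seriesTerm_le
  refine ⟨hsummable, ?_⟩
  calc ∑' n, seriesTerm n ≤ 4 / 27 := hasSum_le seriesTerm_le hsummable.hasSum hmajorant
    _ < 1 / (Real.pi * Real.sqrt 3) := four_div_twentySeven_lt_one_div_pi_mul_sqrt_three
end
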